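/- arXiv:2103.07857 — 7 statements merged into one kernel-verified Lean document; each statement's English description precedes it below -/
import Mathlib

section
/- If a multiplicative-weights process starts with total weight n (each of n objects has multiplicity 1), and in each step the multiplicities of at most the objects containing some point are doubled, and the total multiplicity increases by a factor of at most (1 + 1/(2t)) per step (standard MWU invariant), while each step doubles the multiplicity of some fixed set in an optimal cover of size t, then the number of steps is O(t log(n/t)). -/
/-!
Every step doubles some factor of `∏_{i ∈ C} m i` and shrinks none, so after `k` steps this
product is at least `2^k`; by AM-GM the sum of the `t` multiplicities in `C` is then at least
`t · 2^{k/t}`.  The total multiplicity is at most `n (1 + 1/(2t))^k`, so taking logarithms,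
`k log 2 + t log t ≤ t log n + k/2`, i.e. `k ≤ t log (n/t) / (log 2 - 1/2)`.
-/

open Finset Real

lemma two_mul_prod_le_prod_of_exists_double {ι : Type*} {s : Finset ι} {a b : ι → ℕ}
    (hab : ∀ i ∈ s, a i ≤ b i) (hdouble : ∃ i ∈ s, b i = 2 * a i) :
    2 * ∏ i ∈ s, a i ≤ ∏ i ∈ s, b i := by
  classical
  obtain ⟨i, hi, hbi⟩ := hdouble
  rw [← mul_prod_erase s a hi, ← mul_prod_erase s b hi, hbi, mul_assoc]
  gcongr with j hj
  exact hab j (mem_of_mem_erase hj)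

lemma two_pow_mul_prod_le_prod {ι : Type*} {s : Finset ι} {m : ℕ → ι → ℕ} {k : ℕ}
    (hmono : ∀ j < k, ∀ i, m j i ≤ m (j + 1) i)
    (hdouble : ∀ j < k, ∃ i ∈ s, m (j + 1) i = 2 * m j i) :
    2 ^ k * ∏ i ∈ s, m 0 i ≤ ∏ i ∈ s, m k i := by
  induction k with
  | zero => simp
  | succ k ih =>
    calc 2 ^ (k + 1) * ∏ i ∈ s, m 0 i = 2 * (2 ^ k * ∏ i ∈ s, m 0 i) := by ring
      _ ≤ 2 * ∏ i ∈ s, m k i := by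
        gcongr
        exact ih (fun j hj => hmono j (by omega)) (fun j hj => hdouble j (by omega))
      _ ≤ ∏ i ∈ s, m (k + 1) i :=
        two_mul_prod_le_prod_of_exists_double (fun i _ => hmono k k.lt_succ_self i)
          (hdouble k k.lt_succ_self)

lemma prod_rpow_inv_card_le_sum_div_card {ι : Type*} {s : Finset ι} (hs : s.Nonempty)
    {z : ι → ℝ} (hz : ∀ i ∈ s, 0 ≤ z i) :
    (∏ i ∈ s, z i) ^ (#s : ℝ)⁻¹ ≤ (∑ i ∈ s, z i) / #s := by
  simpa using geom_mean_le_arith_mean s (fun _ => 1) z (fun _ _ => zero_le_one)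
    (by simpa using hs) hz

theorem two_rpow_div_card_mul_card_le {ι : Type*} [Fintype ι] {C : Finset ι} (hC : C.Nonempty)
    {m : ℕ → ι → ℕ} {k : ℕ} {r : ℝ} (hr : 0 ≤ r) (h0 : ∀ i, m 0 i = 1)
    (hmono : ∀ j < k, ∀ i, m j i ≤ m (j + 1) i)
    (hgrowth : ∀ j < k, ∑ i, (m (j + 1) i : ℝ) ≤ r * ∑ i, (m j i : ℝ))
    (hdouble : ∀ j < k, ∃ i ∈ C, m (j + 1) i = 2 * m j i) :
    (2 : ℝ) ^ ((k : ℝ) / #C) * #C ≤ Fintype.card ι * r ^ k := by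
  have hprod : (2 : ℝ) ^ k ≤ ∏ i ∈ C, (m k i : ℝ) := by
    exact_mod_cast (by simpa [h0] using two_pow_mul_prod_le_prod hmono hdouble)
  have htotal : ∑ i, (m k i : ℝ) ≤ r ^ k * Fintype.card ι := by
    simpa [h0] using le_geom (u := fun j => ∑ i, (m j i : ℝ)) hr k hgrowth
  have hcard : (0 : ℝ) < #C := by exact_mod_cast hC.card_pos
  calc (2 : ℝ) ^ ((k : ℝ) / #C) * #C = ((2 : ℝ) ^ k) ^ (#C : ℝ)⁻¹ * #C := by
        rw [← rpow_natCast, ← rpow_mul zero_le_two, div_eq_mul_inv]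
    _ ≤ (∏ i ∈ C, (m k i : ℝ)) ^ (#C : ℝ)⁻¹ * #C := by gcongr
    _ ≤ (∑ i ∈ C, (m k i : ℝ)) / #C * #C := by
        gcongr
        exact prod_rpow_inv_card_le_sum_div_card hC fun i _ => Nat.cast_nonneg _
    _ = ∑ i ∈ C, (m k i : ℝ) := div_mul_cancel₀ _ hcard.ne'
    _ ≤ ∑ i, (m k i : ℝ) := sum_le_univ_sum_of_nonneg fun i => Nat.cast_nonneg _
    _ ≤ Fintype.card ι * r ^ k := by linarith

lemma mul_sub_le_mul_log_div_of_two_rpow_le {k : ℕ} {t n : ℝ} (ht : 0 < t)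
    (h : (2 : ℝ) ^ ((k : ℝ) / t) * t ≤ n * (1 + 1 / (2 * t)) ^ k) :
    k * (log 2 - 1 / 2) ≤ t * log (n / t) := by
  have hlhs : 0 < (2 : ℝ) ^ ((k : ℝ) / t) * t := by positivity
  have hn : 0 < n := pos_of_mul_pos_left (hlhs.trans_le h) (by positivity)
  have hlog := log_le_log hlhs h
  rw [log_mul (by positivity) ht.ne', log_rpow zero_lt_two, log_mul hn.ne' (by positivity),
    log_pow] at hlog
  have hstep : log (1 + 1 / (2 * t)) ≤ 1 / (2 * t) := by
    linarith [log_le_sub_one_of_pos (x := 1 + 1 / (2 * t)) (by positivity)]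
  have hk : (k : ℝ) * log (1 + 1 / (2 * t)) ≤ k * (1 / (2 * t)) := by gcongr
  have hdiv : (k : ℝ) / t * log 2 + log t ≤ log n + k * (1 / (2 * t)) := by linarith
  have hscaled := mul_le_mul_of_nonneg_left hdiv ht.le
  rw [log_div hn.ne' ht.ne']
  field_simp at hscaled
  linarith

/-- abstract MWU counting argument.  `n` objects have positive
integer multiplicities, all initially `1`.  There is a distinguished set `C`
of `t` objects (an optimal cover).  In each of the `k` steps, multiplicities
never decrease, the total multiplicity grows by a factor of at most
`1 + 1/(2t)`, and the multiplicity of some object of `C` is doubled.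
Then the number of steps is `O(t · log (n/t))`. -/
theorem stmt2 :
    ∃ A : ℝ, 0 < A ∧
      ∀ (ι : Type) (_ : Fintype ι) (n t k : ℕ) (C : Finset ι) (m : ℕ → ι → ℕ),
        Fintype.card ι = n → C.card = t → 1 ≤ t →
        (∀ i, m 0 i = 1) →
        (∀ j < k, ∀ i, m j i ≤ m (j + 1) i) →
        (∀ j < k, (∑ i, (m (j + 1) i : ℝ)) ≤ (1 + 1 / (2 * t)) * ∑ i, (m j i : ℝ)) →
        (∀ j < k, ∃ i ∈ C, m (j + 1) i = 2 * m j i) →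
        (k : ℝ) ≤ A * t * Real.log ((n : ℝ) / t) := by
  have hc : 0 < log 2 - 1 / 2 := by linarith [log_two_gt_d9]
  refine ⟨(log 2 - 1 / 2)⁻¹, inv_pos.2 hc, ?_⟩
  intro ι _ n t k C m hcard hC ht h0 hmono hgrowth hdouble
  have key := two_rpow_div_card_mul_card_le (card_pos.1 (by omega)) (by positivity) h0 hmono
    hgrowth hdouble
  rw [hC, hcard] at key
  have hbound := mul_sub_le_mul_log_div_of_two_rpow_le (by positivity) key
  rw [mul_assoc, le_inv_mul_iff₀ hc]
  linarith
end

section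
/- Let Γ be an axis-aligned square cell and let L be a finite set of long axis-aligned squares with respect to Γ (squares intersecting Γ with no vertex in Γ), none of which contains Γ. Then the union of the squares of L restricted to Γ equals the union of at most 4 squares of L restricted to Γ, and the complement within Γ of this union is an axis-aligned rectangle. -/
/-- The closed axis-aligned square with center `q.1`, `q.2.1` and half-side
`q.2.2`, for `q : ℝ × ℝ × ℝ`. -/
def SqOf (q : ℝ × ℝ × ℝ) : Set (ℝ × ℝ) :=
  {p | |p.1 - q.1| ≤ q.2.2 ∧ |p.2 - q.2.1| ≤ q.2.2}

/-- The four vertices of the square encoded by `q : ℝ × ℝ × ℝ`. -/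
def SqOfVerts (q : ℝ × ℝ × ℝ) : List (ℝ × ℝ) :=
  [(q.1 - q.2.2, q.2.1 - q.2.2), (q.1 + q.2.2, q.2.1 - q.2.2),
   (q.1 - q.2.2, q.2.1 + q.2.2), (q.1 + q.2.2, q.2.1 + q.2.2)]

open Set

def Hp : Fin 4 → ℝ → Set (ℝ × ℝ)
  | 0, t => {p | p.1 ≤ t}
  | 1, t => {p | -t ≤ p.1}
  | 2, t => {p | p.2 ≤ t}
  | 3, t => {p | -t ≤ p.2}

lemma Hp_mono (i : Fin 4) {t t' : ℝ} (h : t ≤ t') : Hp i t ⊆ Hp i t' := by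
  fin_cases i <;> intro p hp <;> simp only [Hp, mem_setOf_eq] at * <;> linarith

lemma compl_Hp (i : Fin 4) (t : ℝ) :
    ∃ A B : Set ℝ, A.OrdConnected ∧ B.OrdConnected ∧
      ∀ p : ℝ × ℝ, p ∉ Hp i t ↔ p.1 ∈ A ∧ p.2 ∈ B := by
  fin_cases i
  · exact ⟨Ioi t, univ, ordConnected_Ioi, ordConnected_univ,
      fun p => by simp [Hp, not_le]⟩
  · exact ⟨Iio (-t), univ, ordConnected_Iio, ordConnected_univ,
      fun p => by simp [Hp, not_le]⟩
  · exact ⟨univ, Ioi t, ordConnected_univ, ordConnected_Ioi,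
      fun p => by simp [Hp, not_le]⟩
  · exact ⟨univ, Iio (-t), ordConnected_univ, ordConnected_Iio,
      fun p => by simp [Hp, not_le]⟩

lemma classify (cx cy cz : ℝ) (hcz : 0 < cz) (ax ay r : ℝ) (hr : 0 < r)
    (hne : (SqOf (ax, ay, r) ∩ SqOf (cx, cy, cz)).Nonempty)
    (hv : ∀ v ∈ SqOfVerts (ax, ay, r), v ∉ SqOf (cx, cy, cz))
    (hns : ¬ SqOf (cx, cy, cz) ⊆ SqOf (ax, ay, r)) :
    ∃ i t, SqOf (ax, ay, r) ∩ SqOf (cx, cy, cz) = Hp i t ∩ SqOf (cx, cy, cz) := by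
  obtain ⟨p0, hp0q, hp0c⟩ := hne
  obtain ⟨p1, hp1c, hp1q⟩ := not_subset.1 hns
  have v11 := hv (ax - r, ay - r) (by simp [SqOfVerts])
  have v21 := hv (ax + r, ay - r) (by simp [SqOfVerts])
  have v12 := hv (ax - r, ay + r) (by simp [SqOfVerts])
  have v22 := hv (ax + r, ay + r) (by simp [SqOfVerts])
  simp only [SqOf, mem_setOf_eq, abs_le, not_and_or, not_le, not_and] at hp0q hp0c hp1c hp1q v11 v21 v12 v22
  obtain ⟨⟨q1, q2⟩, q3, q4⟩ := hp0q
  obtain ⟨⟨c1, c2⟩, c3, c4⟩ := hp0c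
  obtain ⟨⟨d1, d2⟩, d3, d4⟩ := hp1c
  have key : (ay - r < cy - cz ∧ cy + cz < ay + r) ∨
      (ax - r < cx - cz ∧ cx + cz < ax + r) := by
    by_cases hY1 : cy - cz ≤ ay - r ∧ ay - r ≤ cy + cz
    · right
      constructor
      · rcases v11 with h | h
        · rcases h with h | h <;> linarith
        · rcases h with h | h <;> linarith
      · rcases v21 with h | h
        · rcases h with h | h <;> linarith
        · rcases h with h | h <;> linarith
    · by_cases hY2 : cy - cz ≤ ay + r ∧ ay + r ≤ cy + cz
      · right
        constructor
        · rcases v12 with h | h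
          · rcases h with h | h <;> linarith
          · rcases h with h | h <;> linarith
        · rcases v22 with h | h
          · rcases h with h | h <;> linarith
          · rcases h with h | h <;> linarith
      · left
        rw [not_and_or, not_le, not_le] at hY1 hY2
        constructor
        · rcases hY1 with h | h <;> linarith
        · rcases hY2 with h | h <;> linarith
  rcases key with ⟨hy1, hy2⟩ | ⟨hx1, hx2⟩
  · -- y-free: slab in x direction
    have hr2 : cz < r := by linarith
    have hyok : -r ≤ p1.2 - ay ∧ p1.2 - ay ≤ r := ⟨by linarith, by linarith⟩
    have hxfail : p1.1 - ax < -r ∨ r < p1.1 - ax := by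
      rcases hp1q with h | h
      · exact h
      · rcases h with h | h <;> linarith
    rcases hxfail with h | h
    · refine ⟨1, -(ax - r), ?_⟩
      ext p
      simp only [SqOf, Hp, mem_inter_iff, mem_setOf_eq, abs_le, neg_neg]
      constructor
      · rintro ⟨⟨⟨hx1', hx2'⟩, _⟩, hc⟩
        exact ⟨by linarith, hc⟩
      · rintro ⟨h1, hc⟩
        obtain ⟨⟨e1, e2⟩, e3, e4⟩ := hc
        refine ⟨⟨⟨by linarith, by linarith⟩, by constructor <;> linarith⟩,
          ⟨⟨e1, e2⟩, e3, e4⟩⟩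
    · refine ⟨0, ax + r, ?_⟩
      ext p
      simp only [SqOf, Hp, mem_inter_iff, mem_setOf_eq, abs_le]
      constructor
      · rintro ⟨⟨⟨hx1', hx2'⟩, _⟩, hc⟩
        exact ⟨by linarith, hc⟩
      · rintro ⟨h1, hc⟩
        obtain ⟨⟨e1, e2⟩, e3, e4⟩ := hc
        refine ⟨⟨⟨by linarith, by linarith⟩, by constructor <;> linarith⟩,
          ⟨⟨e1, e2⟩, e3, e4⟩⟩
  · -- x-free: slab in y direction
    have hr2 : cz < r := by linarith
    have hxok : -r ≤ p1.1 - ax ∧ p1.1 - ax ≤ r := ⟨by linarith, by linarith⟩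
    have hyfail : p1.2 - ay < -r ∨ r < p1.2 - ay := by
      rcases hp1q with h | h
      · rcases h with h | h <;> linarith
      · exact h
    rcases hyfail with h | h
    · refine ⟨3, -(ay - r), ?_⟩
      ext p
      simp only [SqOf, Hp, mem_inter_iff, mem_setOf_eq, abs_le, neg_neg]
      constructor
      · rintro ⟨⟨_, ⟨hy1', hy2'⟩⟩, hc⟩
        exact ⟨by linarith, hc⟩
      · rintro ⟨h1, hc⟩
        obtain ⟨⟨e1, e2⟩, e3, e4⟩ := hc
        refine ⟨⟨by constructor <;> linarith, ⟨by linarith, by linarith⟩⟩,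
          ⟨⟨e1, e2⟩, e3, e4⟩⟩
    · refine ⟨2, ay + r, ?_⟩
      ext p
      simp only [SqOf, Hp, mem_inter_iff, mem_setOf_eq, abs_le]
      constructor
      · rintro ⟨⟨_, ⟨hy1', hy2'⟩⟩, hc⟩
        exact ⟨by linarith, hc⟩
      · rintro ⟨h1, hc⟩
        obtain ⟨⟨e1, e2⟩, e3, e4⟩ := hc
        refine ⟨⟨by constructor <;> linarith, ⟨by linarith, by linarith⟩⟩,
          ⟨⟨e1, e2⟩, e3, e4⟩⟩

/-- let `Γ` be an axis-aligned square cell and `L` a finite set of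
long squares with respect to `Γ` (each intersects `Γ`, has no vertex in `Γ`,
and does not contain `Γ`).  Then (a) the union of the squares of `L`
restricted to `Γ` equals the union of at most 4 of them restricted to `Γ`,
and (b) the part of `Γ` not covered by `L` is an axis-aligned rectangle
(a product of two intervals, possibly empty). -/
theorem stmt5 (cx cy cz : ℝ) (hcz : 0 < cz) (L : Finset (ℝ × ℝ × ℝ))
    (hL : ∀ q ∈ L, 0 < q.2.2 ∧
      (SqOf q ∩ SqOf (cx, cy, cz)).Nonempty ∧
      (∀ v ∈ SqOfVerts q, v ∉ SqOf (cx, cy, cz)) ∧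
      ¬ SqOf (cx, cy, cz) ⊆ SqOf q) :
    (∃ M ⊆ L, M.card ≤ 4 ∧
        (⋃ q ∈ L, SqOf q) ∩ SqOf (cx, cy, cz) =
          (⋃ q ∈ M, SqOf q) ∩ SqOf (cx, cy, cz)) ∧
    (∃ A B : Set ℝ, A.OrdConnected ∧ B.OrdConnected ∧
        SqOf (cx, cy, cz) \ (⋃ q ∈ L, SqOf q) = A ×ˢ B) := by
  classical
  have hcl : ∀ q ∈ L, ∃ i t,
      SqOf q ∩ SqOf (cx, cy, cz) = Hp i t ∩ SqOf (cx, cy, cz) := by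
    intro q hq
    obtain ⟨h1, h2, h3, h4⟩ := hL q hq
    exact classify cx cy cz hcz q.1 q.2.1 q.2.2 h1 h2 h3 h4
  choose! d tv hd using hcl
  -- for p ∈ Γ : p ∈ SqOf q ↔ p ∈ Hp (d q) (tv q)
  have hmem : ∀ q ∈ L, ∀ p ∈ SqOf (cx, cy, cz),
      (p ∈ SqOf q ↔ p ∈ Hp (d q) (tv q)) := by
    intro q hq p hp
    have := Set.ext_iff.1 (hd q hq) p
    simp only [mem_inter_iff, hp, and_true] at this
    exact this
  constructor
  · -- part (a)
    have pick : ∀ i : Fin 4, ∃ Mi : Finset (ℝ × ℝ × ℝ),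
        Mi ⊆ L.filter (fun q => d q = i) ∧ Mi.card ≤ 1 ∧
        ∀ q ∈ L.filter (fun q => d q = i), ∃ q' ∈ Mi, tv q ≤ tv q' := by
      intro i
      rcases (L.filter (fun q => d q = i)).eq_empty_or_nonempty with h | h
      · exact ⟨∅, by simp, by simp, by simp [h]⟩
      · obtain ⟨q', hq', hmax⟩ := Finset.exists_max_image _ tv h
        exact ⟨{q'}, by simpa using hq', by simp,
          fun q hq => ⟨q', by simp, hmax q hq⟩⟩
    choose Mi hMi1 hMi2 hMi3 using pick
    have hMiL : ∀ i, Mi i ⊆ L := fun i =>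
      (hMi1 i).trans (Finset.filter_subset _ _)
    refine ⟨Finset.univ.biUnion Mi, ?_, ?_, ?_⟩
    · intro q hq
      obtain ⟨i, _, hqi⟩ := Finset.mem_biUnion.1 hq
      exact hMiL i hqi
    · calc (Finset.univ.biUnion Mi).card ≤ ∑ i, (Mi i).card :=
            Finset.card_biUnion_le
        _ ≤ ∑ _i : Fin 4, 1 := Finset.sum_le_sum (fun i _ => hMi2 i)
        _ = 4 := by simp
    · ext p
      simp only [mem_inter_iff, mem_iUnion, exists_prop]
      constructor
      · rintro ⟨⟨q, hqL, hpq⟩, hpc⟩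
        refine ⟨?_, hpc⟩
        have hqf : q ∈ L.filter (fun q => d q = d q) := by
          simp [hqL]
        have hqf' : q ∈ L.filter (fun q' => d q' = d q) := by
          simp [hqL]
        obtain ⟨q', hq'Mi, hle⟩ := hMi3 (d q) q hqf'
        have hq'f := hMi1 (d q) hq'Mi
        simp only [Finset.mem_filter] at hq'f
        obtain ⟨hq'L, hq'd⟩ := hq'f
        refine ⟨q', Finset.mem_biUnion.2 ⟨d q, Finset.mem_univ _, hq'Mi⟩, ?_⟩
        have hpH : p ∈ Hp (d q) (tv q) := (hmem q hqL p hpc).1 hpq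
        have hpH' : p ∈ Hp (d q') (tv q') := by
          rw [hq'd]; exact Hp_mono (d q) hle hpH
        exact (hmem q' hq'L p hpc).2 hpH'
      · rintro ⟨⟨q, hqM, hpq⟩, hpc⟩
        obtain ⟨i, _, hqi⟩ := Finset.mem_biUnion.1 hqM
        exact ⟨⟨q, hMiL i hqi, hpq⟩, hpc⟩
  · -- part (b)
    choose Ax Ay hAx hAy hAB using fun (i : Fin 4) (t : ℝ) => compl_Hp i t
    refine ⟨Icc (cx - cz) (cx + cz) ∩ ⋂ q ∈ L, Ax (d q) (tv q),
        Icc (cy - cz) (cy + cz) ∩ ⋂ q ∈ L, Ay (d q) (tv q), ?_, ?_, ?_⟩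
    · exact (ordConnected_Icc).inter
        (ordConnected_biInter fun q _ => hAx _ _)
    · exact (ordConnected_Icc).inter
        (ordConnected_biInter fun q _ => hAy _ _)
    · ext p
      simp only [mem_diff, mem_iUnion, exists_prop, not_exists, not_and,
        mem_prod, mem_inter_iff, mem_iInter, mem_Icc]
      constructor
      · rintro ⟨hpc, hnot⟩
        have hpc' := hpc
        simp only [SqOf, mem_setOf_eq, abs_le] at hpc'
        have hq : ∀ q ∈ L, p.1 ∈ Ax (d q) (tv q) ∧ p.2 ∈ Ay (d q) (tv q) := by
          intro q hqL
          refine (hAB (d q) (tv q) p).1 ?_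
          intro hpH
          exact hnot q hqL ((hmem q hqL p hpc).2 hpH)
        exact ⟨⟨⟨by linarith [hpc'.1.1], by linarith [hpc'.1.2]⟩,
            fun q hqL => (hq q hqL).1⟩,
          ⟨⟨by linarith [hpc'.2.1], by linarith [hpc'.2.2]⟩,
            fun q hqL => (hq q hqL).2⟩⟩
      · rintro ⟨⟨⟨hx1, hx2⟩, hAq⟩, ⟨hy1, hy2⟩, hBq⟩
        have hpc : p ∈ SqOf (cx, cy, cz) := by
          simp only [SqOf, mem_setOf_eq, abs_le]
          constructor <;> constructor <;> linarith
        refine ⟨hpc, ?_⟩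
        intro q hqL hpq
        have hpH : p ∈ Hp (d q) (tv q) := (hmem q hqL p hpc).1 hpq
        exact ((hAB (d q) (tv q) p).2 ⟨hAq q hqL, hBq q hqL⟩) hpH
end

section
/- In the quadtree-based decomposition for set cover with axis-aligned squares: if the plane is partitioned into cells such that for each square in an optimal cover, that square is 'short' in at most the 4 cells containing its vertices, then the sum over all cells Γ of the sizes of optimal covers of the points in Γ (using short squares of Γ plus at most 4 maximal long squares per cell) is at most 4·OPT + 4·(number of cells). -/
open Finset

/-- `q` is short in a cell `Γ`: some vertex of `q` lies in `Γ`. -/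
def ShortIn (q : ℝ × ℝ × ℝ) (Γ : Set (ℝ × ℝ)) : Prop :=
  ∃ v ∈ SqOfVerts q, v ∈ Γ

/-- `q` is long in a cell `Γ`: it meets `Γ` but no vertex of `q` lies in `Γ`. -/
def LongIn (q : ℝ × ℝ × ℝ) (Γ : Set (ℝ × ℝ)) : Prop :=
  (SqOf q ∩ Γ).Nonempty ∧ ∀ v ∈ SqOfVerts q, v ∉ Γ

/-- the plane is partitioned into `k` cells; `C ⊆ S` is an optimal
cover of `X` (of size `OPT`); for each cell `i`, `M i` is a set of at most 4
designated (maximal long) squares of `S` whose union covers, inside cell `i`,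
everything covered there by long squares of `S`; and `optΓ i` is the optimum
for covering `X ∩ cell i` by squares of `S` short in cell `i` together with
`M i`.  Then `∑ i, optΓ i ≤ 4·OPT + 4·k`. -/
theorem stmt6 (k : ℕ) (cell : Fin k → Set (ℝ × ℝ))
    (X : Finset (ℝ × ℝ)) (S C : Finset (ℝ × ℝ × ℝ))
    (M : Fin k → Finset (ℝ × ℝ × ℝ)) (optΓ : Fin k → ℕ)
    (hpart : ∀ p : ℝ × ℝ, ∃! i, p ∈ cell i)
    (hCS : C ⊆ S)
    (hCcov : ∀ p ∈ X, ∃ q ∈ C, p ∈ SqOf q)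
    (hCopt : ∀ C' ⊆ S, (∀ p ∈ X, ∃ q ∈ C', p ∈ SqOf q) → C.card ≤ C'.card)
    (hMS : ∀ i, M i ⊆ S)
    (hMcard : ∀ i, (M i).card ≤ 4)
    (hMcov : ∀ i, ∀ q ∈ S, LongIn q (cell i) →
      ∀ p ∈ cell i, p ∈ SqOf q → ∃ q' ∈ M i, p ∈ SqOf q')
    (hoptΓ : ∀ i (F : Finset (ℝ × ℝ × ℝ)),
      (∀ q ∈ F, q ∈ S ∧ (ShortIn q (cell i) ∨ q ∈ M i)) →
      (∀ p ∈ X, p ∈ cell i → ∃ q ∈ F, p ∈ SqOf q) →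
      optΓ i ≤ F.card) :
    ∑ i, optΓ i ≤ 4 * C.card + 4 * k := by
  classical
  have hbound : ∀ i, optΓ i ≤ (C.filter (fun q => ShortIn q (cell i))).card + 4 := by
    intro i
    have h1 : optΓ i ≤ ((C.filter (fun q => ShortIn q (cell i))) ∪ M i).card := by
      apply hoptΓ
      · intro q hq
        rcases Finset.mem_union.1 hq with hq | hq
        · rcases Finset.mem_filter.1 hq with ⟨hqC, hs⟩
          exact ⟨hCS hqC, Or.inl hs⟩
        · exact ⟨hMS i hq, Or.inr hq⟩
      · intro p hpX hpc
        obtain ⟨q, hqC, hpq⟩ := hCcov p hpX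
        by_cases hs : ShortIn q (cell i)
        · exact ⟨q, Finset.mem_union_left _ (Finset.mem_filter.2 ⟨hqC, hs⟩), hpq⟩
        · have hlong : LongIn q (cell i) :=
            ⟨⟨p, hpq, hpc⟩, fun v hv hvc => hs ⟨v, hv, hvc⟩⟩
          obtain ⟨q', hq', hpq'⟩ := hMcov i q (hCS hqC) hlong p hpc hpq
          exact ⟨q', Finset.mem_union_right _ hq', hpq'⟩
    have h2 := Finset.card_union_le (C.filter (fun q => ShortIn q (cell i))) (M i)
    have h3 := hMcard i
    omega
  have hcount : ∀ q, (Finset.univ.filter (fun i => ShortIn q (cell i))).card ≤ 4 := by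
    intro q
    have hsub : (Finset.univ.filter (fun i => ShortIn q (cell i))) ⊆
        (SqOfVerts q).toFinset.image (fun v => (hpart v).choose) := by
      intro i hi
      rcases Finset.mem_filter.1 hi with ⟨-, v, hv, hvc⟩
      refine Finset.mem_image.2 ⟨v, List.mem_toFinset.2 hv, ?_⟩
      exact ((hpart v).choose_spec.2 i hvc).symm
    calc (Finset.univ.filter (fun i => ShortIn q (cell i))).card
        ≤ ((SqOfVerts q).toFinset.image (fun v => (hpart v).choose)).card :=
          Finset.card_le_card hsub
      _ ≤ (SqOfVerts q).toFinset.card := Finset.card_image_le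
      _ ≤ (SqOfVerts q).length := (SqOfVerts q).toFinset_card_le
      _ = 4 := by simp [SqOfVerts]
  have hsum : ∑ i, (C.filter (fun q => ShortIn q (cell i))).card ≤ 4 * C.card := by
    have : ∑ i, (C.filter (fun q => ShortIn q (cell i))).card
        = ∑ q ∈ C, (Finset.univ.filter (fun i => ShortIn q (cell i))).card := by
      simp only [Finset.card_filter]
      rw [Finset.sum_comm]
    rw [this]
    calc ∑ q ∈ C, (Finset.univ.filter (fun i => ShortIn q (cell i))).card
        ≤ ∑ _q ∈ C, 4 := Finset.sum_le_sum (fun q _ => hcount q)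
      _ = 4 * C.card := by rw [Finset.sum_const]; ring
  calc ∑ i, optΓ i
      ≤ ∑ i, ((C.filter (fun q => ShortIn q (cell i))).card + 4) :=
        Finset.sum_le_sum (fun i _ => hbound i)
    _ = (∑ i, (C.filter (fun q => ShortIn q (cell i))).card) + 4 * k := by
        rw [Finset.sum_add_distrib, Finset.sum_const, Finset.card_univ,
          Fintype.card_fin, smul_eq_mul, mul_comm]
    _ ≤ 4 * C.card + 4 * k := by omega
end

section
/- In the cluster decomposition: ∑_γ OPT_γ ≤ OPT, provided that any halfspace of S crossing cells of two different clusters belongs to S_B, the point sets X_γ are pairwise disjoint, and for each γ, every halfspace of S \ S_B containing a point of X_γ (not covered by R ∪ S_B) belongs to S_γ and to no other S_{γ'}. -/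
open Finset

open Classical in
/-- cluster decomposition for set cover, other direction:
`∑_γ OPT_γ ≤ OPT`.  The cluster point sets `Xγ` are pairwise disjoint, the
cluster halfspace sets `Sγ ⊆ S \ S_B` are pairwise disjoint, every halfspace
of `S \ S_B` containing a point of `Xγ γ` not covered by `R ∪ S_B` belongs to
`Sγ γ`, and `optγ γ` is the minimum size of a subset of `Sγ γ` covering the
points of `Xγ γ` not covered by `R ∪ S_B`.  If `C` is a minimum cover of `X`
by `S` (so `|C| = OPT`), then `∑ γ, optγ γ ≤ |C|`. -/
theorem stmt9 {α : Type} (X : Finset α) (S R SB : Finset (Set α)) (m : ℕ)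
    (Xγ : Fin m → Finset α) (Sγ : Fin m → Finset (Set α))
    (optγ : Fin m → ℕ) (C : Finset (Set α))
    (hR : R ⊆ S) (hSB : SB ⊆ S)
    (hXγX : ∀ γ, Xγ γ ⊆ X)
    (hXdisj : ∀ γ γ', γ ≠ γ' → Disjoint (Xγ γ) (Xγ γ'))
    (hSγ : ∀ γ, Sγ γ ⊆ S \ SB)
    (hSdisj : ∀ γ γ', γ ≠ γ' → Disjoint (Sγ γ) (Sγ γ'))
    (hkey : ∀ γ, ∀ h ∈ S, h ∉ SB →
      ∀ p ∈ Xγ γ, ¬ (∃ s ∈ R ∪ SB, p ∈ s) → p ∈ h → h ∈ Sγ γ)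
    (hoptγ : ∀ γ (G : Finset (Set α)), G ⊆ Sγ γ →
      (∀ p ∈ Xγ γ, ¬ (∃ s ∈ R ∪ SB, p ∈ s) → ∃ s ∈ G, p ∈ s) →
      optγ γ ≤ G.card)
    (hCS : C ⊆ S)
    (hCcov : ∀ p ∈ X, ∃ s ∈ C, p ∈ s)
    (hCopt : ∀ C' ⊆ S, (∀ p ∈ X, ∃ s ∈ C', p ∈ s) → C.card ≤ C'.card) :
    ∑ γ, optγ γ ≤ C.card := by
  have hle : ∀ γ, optγ γ ≤ (C ∩ Sγ γ).card := by
    intro γ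
    apply hoptγ γ _ (inter_subset_right)
    intro p hp hnc
    obtain ⟨s, hsC, hps⟩ := hCcov p (hXγX γ hp)
    have hsSB : s ∉ SB := fun hsb => hnc ⟨s, by simp [hsb], hps⟩
    exact ⟨s, mem_inter.2 ⟨hsC, hkey γ s (hCS hsC) hsSB p hp hnc hps⟩, hps⟩
  calc ∑ γ, optγ γ ≤ ∑ γ, (C ∩ Sγ γ).card := Finset.sum_le_sum fun γ _ => hle γ
    _ = (Finset.univ.biUnion fun γ => C ∩ Sγ γ).card := by
        rw [Finset.card_biUnion]
        intro γ _ γ' _ hne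
        exact ((hSdisj γ γ' hne).mono inter_subset_right inter_subset_right)
    _ ≤ C.card := Finset.card_le_card (by
        intro x hx
        obtain ⟨γ, _, hx⟩ := Finset.mem_biUnion.1 hx
        exact (mem_inter.1 hx).1)
end

section
/- The recurrence T(n) ≤ ∑_i T(n_i) + O(n log n), where ∑_i n_i ≤ n, max_i n_i ≤ c·√n·(log n)^c for a constant c, and T(n) = O(n) when n is below a constant, solves to T(n) = O(n log n). -/
/-- Crude bound: the recurrence implies `T n ≤ C * n^3` for all `n ≥ 1`. -/
lemma stmt10_crude (c C : ℝ) (n₀ : ℕ) (T : ℕ → ℝ)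
    (hC : 0 < C)
    (hbase : ∀ n ≤ n₀, T n ≤ C)
    (hrec : ∀ n, n₀ < n → ∃ l : List ℕ,
      l.sum ≤ n ∧
      (∀ m ∈ l, 1 ≤ m ∧ m < n ∧ (m : ℝ) ≤ c * Real.sqrt n * (Real.log n) ^ c) ∧
      T n ≤ (l.map T).sum + C * n * Real.log n) :
    ∀ n : ℕ, 1 ≤ n → T n ≤ C * (n : ℝ) ^ 3 := by
  intro n
  induction n using Nat.strong_induction_on with
  | _ n ih =>
    intro hn1
    by_cases hle : n ≤ n₀
    · have h1 : (1:ℝ) ≤ (n:ℝ) := by exact_mod_cast hn1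
      have := hbase n hle
      nlinarith [this, pow_le_pow_left₀ (by norm_num : (0:ℝ) ≤ 1) h1 3]
    · push_neg at hle
      obtain ⟨l, hsum, hmem, hT⟩ := hrec n hle
      have hn1R : (1:ℝ) ≤ (n:ℝ) := by exact_mod_cast hn1
      have hnpos : (0:ℝ) < n := by linarith
      -- bound each T m by C * (n-1)^2 * m
      have hstep : ∀ m ∈ l, T m ≤ C * ((n:ℝ) - 1) ^ 2 * (m:ℝ) := by
        intro m hm
        obtain ⟨hm1, hmn, -⟩ := hmem m hm
        have hmR : (m:ℝ) ≤ (n:ℝ) - 1 := by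
          have : (m:ℝ) + 1 ≤ (n:ℝ) := by exact_mod_cast hmn
          linarith
        have hm0 : (0:ℝ) ≤ (m:ℝ) := by positivity
        have hih := ih m hmn hm1
        have hm2 : (m:ℝ)^2 ≤ ((n:ℝ) - 1)^2 := by nlinarith
        nlinarith [hih, mul_le_mul_of_nonneg_left hm2 (mul_nonneg hC.le hm0)]
      have hsum1 : (l.map T).sum ≤ (l.map (fun m : ℕ => C * ((n:ℝ) - 1) ^ 2 * (m:ℝ))).sum :=
        List.sum_le_sum hstep
      have hsum2 : (l.map (fun m : ℕ => C * ((n:ℝ) - 1) ^ 2 * (m:ℝ))).sum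
          = C * ((n:ℝ) - 1) ^ 2 * (l.map (fun m : ℕ => (m:ℝ))).sum :=
        List.sum_map_mul_left l _ _
      have hsum3 : (l.map (fun m : ℕ => (m:ℝ))).sum ≤ (n:ℝ) := by
        rw [← Nat.cast_list_sum]
        exact_mod_cast hsum
      have hfac : (0:ℝ) ≤ C * ((n:ℝ) - 1) ^ 2 := by positivity
      have hlog : Real.log n ≤ (n:ℝ) - 1 := Real.log_le_sub_one_of_pos hnpos
      have hlog0 : 0 ≤ Real.log n := Real.log_nonneg hn1R
      have hS : (l.map T).sum ≤ C * ((n:ℝ) - 1) ^ 2 * (n:ℝ) := by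
        calc (l.map T).sum ≤ C * ((n:ℝ) - 1) ^ 2 * (l.map (fun m : ℕ => (m:ℝ))).sum := by
              rw [← hsum2]; exact hsum1
        _ ≤ C * ((n:ℝ) - 1) ^ 2 * (n:ℝ) := mul_le_mul_of_nonneg_left hsum3 hfac
      have hB : C * (n:ℝ) * Real.log n ≤ C * (n:ℝ) * ((n:ℝ) - 1) :=
        mul_le_mul_of_nonneg_left hlog (by positivity)
      have hA : C * ((n:ℝ) - 1) ^ 2 * (n:ℝ) + C * (n:ℝ) * ((n:ℝ) - 1) ≤ C * (n:ℝ) ^ 3 := by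
        nlinarith
      linarith

/-- For large `n`, any `m ≤ c √n (log n)^c` has `log m ≤ (3/4) log n`. -/
lemma stmt10_log (c : ℝ) (hc : 0 < c) : ∃ N : ℕ, ∀ n : ℕ, N ≤ n → ∀ m : ℕ, 1 ≤ m →
    (m : ℝ) ≤ c * Real.sqrt n * (Real.log n) ^ c → Real.log m ≤ (3/4) * Real.log n := by
  set t₀ : ℝ := 8 * c + 4 + 4 * |Real.log c| with ht₀
  have ht₀pos : (0:ℝ) < t₀ := by positivity
  have ht₀1 : (1:ℝ) ≤ t₀ := by
    have := abs_nonneg (Real.log c); linarith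
  set A : ℝ := t₀ ^ 2 with hA
  refine ⟨⌈Real.exp A⌉₊, ?_⟩
  intro n hn m hm1 hmle
  have hexp : Real.exp A ≤ (n:ℝ) := by
    calc Real.exp A ≤ (⌈Real.exp A⌉₊ : ℝ) := Nat.le_ceil _
    _ ≤ (n:ℝ) := by exact_mod_cast hn
  have hnpos : (0:ℝ) < (n:ℝ) := lt_of_lt_of_le (Real.exp_pos A) hexp
  have hlogn : A ≤ Real.log n := by
    have := Real.log_le_log (Real.exp_pos A) hexp
    rwa [Real.log_exp] at this
  have hApos : (0:ℝ) < A := by positivity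
  have hlognpos : (0:ℝ) < Real.log n := lt_of_lt_of_le hApos hlogn
  set t : ℝ := Real.sqrt (Real.log n) with ht
  have ht2 : t ^ 2 = Real.log n := Real.sq_sqrt hlognpos.le
  have htt₀ : t₀ ≤ t := by
    have : Real.sqrt A ≤ t := Real.sqrt_le_sqrt hlogn
    rwa [hA, Real.sqrt_sq ht₀pos.le] at this
  have ht1 : (1:ℝ) ≤ t := le_trans ht₀1 htt₀
  have htpos : (0:ℝ) < t := lt_of_lt_of_le one_pos ht1
  -- log m ≤ log c + (1/2) log n + c * log (log n)
  have hm0 : (0:ℝ) < (m:ℝ) := by exact_mod_cast hm1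
  have hsq : (0:ℝ) < Real.sqrt n := Real.sqrt_pos.mpr hnpos
  have hrp : (0:ℝ) < (Real.log n) ^ c := Real.rpow_pos_of_pos hlognpos c
  have hlogm : Real.log m ≤ Real.log c + Real.log n / 2 + c * Real.log (Real.log n) := by
    calc Real.log m ≤ Real.log (c * Real.sqrt n * (Real.log n) ^ c) :=
          Real.log_le_log hm0 hmle
    _ = Real.log (c * Real.sqrt n) + Real.log ((Real.log n) ^ c) :=
          Real.log_mul (by positivity) (ne_of_gt hrp)
    _ = Real.log c + Real.log (Real.sqrt n) + Real.log ((Real.log n) ^ c) := by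
          rw [Real.log_mul (ne_of_gt hc) (ne_of_gt hsq)]
    _ = Real.log c + Real.log n / 2 + c * Real.log (Real.log n) := by
          rw [Real.log_sqrt hnpos.le, Real.log_rpow hlognpos]
  -- log (log n) ≤ 2 t
  have hloglog : Real.log (Real.log n) ≤ 2 * t := by
    have h1 : Real.log t ≤ t - 1 := Real.log_le_sub_one_of_pos htpos
    have h2 : Real.log (Real.log n) = 2 * Real.log t := by
      rw [← ht2]; rw [Real.log_pow]; push_cast; ring
    linarith
  have habs : Real.log c ≤ |Real.log c| := le_abs_self _
  have key : Real.log c + 2 * c * t ≤ (1/4) * t ^ 2 := by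
    nlinarith [mul_le_mul_of_nonneg_left htt₀ htpos.le, abs_nonneg (Real.log c)]
  have hct : c * Real.log (Real.log n) ≤ 2 * c * t := by
    have := mul_le_mul_of_nonneg_left hloglog hc.le
    linarith
  have : Real.log m ≤ Real.log c + Real.log n / 2 + 2 * c * t := by linarith
  rw [← ht2] at *
  linarith

/-- the recurrence `T(n) ≤ ∑_i T(n_i) + O(n log n)` with
`∑_i n_i ≤ n`, each `1 ≤ n_i < n` and `n_i ≤ c·√n·(log n)^c`, and `T`
bounded by a constant below a constant threshold `n₀`, solves to
`T(n) = O(n log n)`. -/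
theorem stmt10 (c C : ℝ) (n₀ : ℕ) (T : ℕ → ℝ)
    (hc : 0 < c) (hC : 0 < C) (hn₀ : 2 ≤ n₀)
    (hTnonneg : ∀ n, 0 ≤ T n)
    (hbase : ∀ n ≤ n₀, T n ≤ C)
    (hrec : ∀ n, n₀ < n → ∃ l : List ℕ,
      l.sum ≤ n ∧
      (∀ m ∈ l, 1 ≤ m ∧ m < n ∧ (m : ℝ) ≤ c * Real.sqrt n * (Real.log n) ^ c) ∧
      T n ≤ (l.map T).sum + C * n * Real.log n) :
    ∃ C' : ℝ, ∀ n : ℕ, 2 ≤ n → T n ≤ C' * n * Real.log n := by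
  obtain ⟨N₁, hN₁⟩ := stmt10_log c hc
  set N : ℕ := max N₁ (n₀ + 1) with hN
  have hN1 : 1 ≤ N := le_trans (by omega) (le_max_right N₁ (n₀ + 1))
  set K : ℝ := max (8 * C) (C * (N:ℝ) ^ 2) with hK
  have hK8C : 8 * C ≤ K := le_max_left _ _
  have hKN : C * (N:ℝ) ^ 2 ≤ K := le_max_right _ _
  have hKpos : 0 < K := lt_of_lt_of_le (by linarith) hK8C
  have main : ∀ n : ℕ, 1 ≤ n → T n ≤ K * (n:ℝ) * (Real.log n + 1) := by
    intro n
    induction n using Nat.strong_induction_on with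
    | _ n ih =>
      intro hn1
      have hn1R : (1:ℝ) ≤ (n:ℝ) := by exact_mod_cast hn1
      have hlog0 : 0 ≤ Real.log n := Real.log_nonneg hn1R
      by_cases hle : n ≤ N
      · -- small case: use the crude bound
        have hcrude := stmt10_crude c C n₀ T hC hbase hrec n hn1
        have hNle : (n:ℝ) ≤ (N:ℝ) := by exact_mod_cast hle
        have hn0 : (0:ℝ) ≤ (n:ℝ) := by linarith
        have hn2 : (n:ℝ)^2 ≤ (N:ℝ)^2 := by nlinarith
        have h1 : C * (n:ℝ) ^ 3 ≤ C * (N:ℝ) ^ 2 * (n:ℝ) := by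
          nlinarith [mul_le_mul_of_nonneg_left hn2 (mul_nonneg hC.le hn0)]
        have h2 : C * (N:ℝ) ^ 2 * (n:ℝ) ≤ K * (n:ℝ) :=
          mul_le_mul_of_nonneg_right hKN hn0
        nlinarith [mul_nonneg (mul_nonneg hKpos.le hn0) hlog0]
      · push_neg at hle
        have hn₀lt : n₀ < n := by
          have : n₀ + 1 ≤ N := le_max_right _ _
          omega
        obtain ⟨l, hsum, hmem, hT⟩ := hrec n hn₀lt
        have hN₁n : N₁ ≤ n := le_trans (le_max_left _ _) hle.le
        have hstep : ∀ m ∈ l, T m ≤ K * ((3/4) * Real.log n + 1) * (m:ℝ) := by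
          intro m hm
          obtain ⟨hm1, hmn, hmle⟩ := hmem m hm
          have hIH := ih m hmn hm1
          have hlogm : Real.log m ≤ (3/4) * Real.log n := hN₁ n hN₁n m hm1 hmle
          have hm0 : (0:ℝ) ≤ (m:ℝ) := by positivity
          nlinarith [mul_le_mul_of_nonneg_left hlogm (mul_nonneg hKpos.le hm0)]
        have hsum1 : (l.map T).sum ≤ (l.map (fun m : ℕ => K * ((3/4) * Real.log n + 1) * (m:ℝ))).sum :=
          List.sum_le_sum hstep
        have hsum2 : (l.map (fun m : ℕ => K * ((3/4) * Real.log n + 1) * (m:ℝ))).sum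
            = K * ((3/4) * Real.log n + 1) * (l.map (fun m : ℕ => (m:ℝ))).sum :=
          List.sum_map_mul_left l _ _
        have hsum3 : (l.map (fun m : ℕ => (m:ℝ))).sum ≤ (n:ℝ) := by
          rw [← Nat.cast_list_sum]; exact_mod_cast hsum
        have hfac : (0:ℝ) ≤ K * ((3/4) * Real.log n + 1) := by positivity
        have h4 : (l.map T).sum ≤ K * ((3/4) * Real.log n + 1) * (n:ℝ) := by
          calc (l.map T).sum ≤ K * ((3/4) * Real.log n + 1) * (l.map (fun m : ℕ => (m:ℝ))).sum := by
                rw [← hsum2]; exact hsum1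
          _ ≤ K * ((3/4) * Real.log n + 1) * (n:ℝ) :=
                mul_le_mul_of_nonneg_left hsum3 hfac
        -- combine: T n ≤ K ((3/4) log n + 1) n + C n log n ≤ K n (log n + 1)
        have hn0 : (0:ℝ) ≤ (n:ℝ) := by linarith
        nlinarith [hT, h4, mul_le_mul_of_nonneg_right hK8C (mul_nonneg hn0 hlog0),
          mul_nonneg (mul_nonneg hC.le hn0) hlog0]
  refine ⟨K * (1 + 1 / Real.log 2), ?_⟩
  intro n hn2
  have h2R : (2:ℝ) ≤ (n:ℝ) := by exact_mod_cast hn2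
  have hlog2 : 0 < Real.log 2 := Real.log_pos (by norm_num)
  have hlogn2 : Real.log 2 ≤ Real.log n := Real.log_le_log (by norm_num) h2R
  have hmain := main n (by omega)
  have h1 : (1:ℝ) ≤ Real.log n / Real.log 2 := (one_le_div hlog2).mpr hlogn2
  have hlogpos : 0 < Real.log n := lt_of_lt_of_le hlog2 hlogn2
  have hstep : K * (n:ℝ) * (Real.log n + 1) ≤ K * (1 + 1 / Real.log 2) * (n:ℝ) * Real.log n := by
    have hn0 : (0:ℝ) ≤ (n:ℝ) := by linarith
    have : Real.log n + 1 ≤ (1 + 1 / Real.log 2) * Real.log n := by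
      rw [add_mul, one_mul, div_mul_eq_mul_div, one_mul]
      have : (1:ℝ) ≤ Real.log n / Real.log 2 := h1
      linarith [this]
    nlinarith [mul_nonneg (le_of_lt hKpos) hn0]
  linarith
end

section
/- The error recurrence E(n, x) ≤ max{ C·x, ∑_i E(n_i, x_i) + C·x / log n }, where ∑_i n_i ≤ n, ∑_i x_i ≤ x, and max_i n_i ≤ c·√n·(log n)^c, with base case E(n, x) ≤ C·x for n below a constant, solves to E(n, x) = O(x). -/
set_option maxHeartbeats 1000000


/-- the error recurrence
`E(n,x) ≤ max { C·x, ∑_i E(n_i,x_i) + C·x/log n }` with `∑ n_i ≤ n`,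
`∑ x_i ≤ x`, each `1 ≤ n_i < n` and `n_i ≤ c·√n·(log n)^c`, and base case
`E(n,x) ≤ C·x` for `n` below a constant threshold `n₀`, solves to
`E(n,x) = O(x)`. -/
theorem stmt11 (c C : ℝ) (n₀ : ℕ) (E : ℕ → ℝ → ℝ)
    (hc : 0 < c) (hC : 0 < C) (hn₀ : 2 ≤ n₀)
    (hEnonneg : ∀ n x, 0 ≤ E n x)
    (hbase : ∀ n ≤ n₀, ∀ x : ℝ, 0 ≤ x → E n x ≤ C * x)
    (hrec : ∀ n, n₀ < n → ∀ x : ℝ, 0 ≤ x → ∃ l : List (ℕ × ℝ),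
      (l.map Prod.fst).sum ≤ n ∧
      (l.map Prod.snd).sum ≤ x ∧
      (∀ p ∈ l, 1 ≤ p.1 ∧ p.1 < n ∧
        (p.1 : ℝ) ≤ c * Real.sqrt n * (Real.log n) ^ c ∧ 0 ≤ p.2) ∧
      E n x ≤ max (C * x)
        ((l.map (fun p => E p.1 p.2)).sum + C * x / Real.log n)) :
    ∃ C' : ℝ, ∀ n : ℕ, ∀ x : ℝ, 0 ≤ x → E n x ≤ C' * x := by
  obtain ⟨a, ha0, hac⟩ : ∃ a : ℝ, 0 ≤ a ∧ Real.log c ≤ a :=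
    ⟨|Real.log c|, abs_nonneg _, le_abs_self _⟩
  set T : ℝ := 8 * c + 4 + 4 * a with hT
  have hT4 : 4 ≤ T := by nlinarith
  set N₁ : ℕ := max 1100 (n₀ + ⌈Real.exp (T ^ 2)⌉₊) with hN₁
  set A : ℝ := C * (1 + 2 * (N₁ : ℝ)) + 4 * C with hA
  have hn₀N : n₀ ≤ N₁ := le_max_of_le_right (Nat.le_add_right _ _)
  have hN1100 : 1100 ≤ N₁ := le_max_left _ _
  -- log k ≥ T^2 for k > N₁
  have hlogbig : ∀ k : ℕ, N₁ < k → T ^ 2 ≤ Real.log k := by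
    intro k hk
    have hk0' : 0 < k := by omega
    have hk0 : (0 : ℝ) < k := by exact_mod_cast hk0'
    have h2 : ⌈Real.exp (T ^ 2)⌉₊ ≤ k :=
      le_trans (le_trans (Nat.le_add_left _ _) (le_max_right 1100 _)) (le_of_lt hk)
    have h1 : Real.exp (T ^ 2) ≤ (k : ℝ) :=
      le_trans (Nat.le_ceil _) (by exact_mod_cast h2)
    rw [Real.le_log_iff_exp_le hk0]
    exact h1
  -- key induction
  have key : ∀ k : ℕ, ∀ x : ℝ, 0 ≤ x →
      E k x ≤ (if k ≤ N₁ then C * (1 + 2 * (k : ℝ)) else A - 3 * C / Real.log k) * x := by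
    intro k
    induction k using Nat.strong_induction_on with
    | _ k ih =>
      intro x hx
      by_cases hk0 : k ≤ n₀
      · rw [if_pos (hk0.trans hn₀N)]
        refine (hbase k hk0 x hx).trans ?_
        have hkc : (0:ℝ) ≤ (k:ℝ) := Nat.cast_nonneg k
        have : C ≤ C * (1 + 2 * (k : ℝ)) := by nlinarith
        exact mul_le_mul_of_nonneg_right this hx
      · push_neg at hk0
        obtain ⟨l, hl1, hl2, hl3, hl4⟩ := hrec k hk0 x hx
        have hk3 : 3 ≤ k := by omega
        have hkpos : (0 : ℝ) < k := by positivity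
        have hlogk1 : 1 ≤ Real.log k := by
          rw [Real.le_log_iff_exp_le hkpos]
          calc Real.exp 1 ≤ 2.7182818286 := le_of_lt Real.exp_one_lt_d9
          _ ≤ 3 := by norm_num
          _ ≤ (k : ℝ) := by exact_mod_cast hk3
        have hlogkpos : 0 < Real.log k := lt_of_lt_of_le one_pos hlogk1
        have hsummul : ∀ B : ℝ, (∀ p ∈ l, E p.1 p.2 ≤ B * p.2) → 0 ≤ B →
            (l.map (fun p => E p.1 p.2)).sum ≤ B * x := by
          intro B hB hB0
          calc (l.map (fun p => E p.1 p.2)).sum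
              ≤ (l.map (fun p => B * p.2)).sum := List.sum_le_sum hB
            _ = B * (l.map Prod.snd).sum := by
                simpa using List.sum_map_mul_left l Prod.snd B
            _ ≤ B * x := mul_le_mul_of_nonneg_left hl2 hB0
        by_cases hkN : k ≤ N₁
        · -- middle regime
          rw [if_pos hkN]
          refine hl4.trans (max_le ?_ ?_)
          · have hkc : (0:ℝ) ≤ (k:ℝ) := Nat.cast_nonneg k
            have : C ≤ C * (1 + 2 * (k : ℝ)) := by nlinarith
            exact mul_le_mul_of_nonneg_right this hx
          · have hkc : (3:ℝ) ≤ (k:ℝ) := by exact_mod_cast hk3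
            have hsum : (l.map (fun p => E p.1 p.2)).sum ≤ (C * (2 * (k:ℝ) - 1)) * x := by
              refine hsummul _ (fun p hp => ?_) (by nlinarith)
              obtain ⟨hp1, hp2, hp3, hp4⟩ := hl3 p hp
              have hihp := ih p.1 hp2 p.2 hp4
              rw [if_pos (by omega : p.1 ≤ N₁)] at hihp
              refine hihp.trans (mul_le_mul_of_nonneg_right ?_ hp4)
              have : (p.1 : ℝ) ≤ (k : ℝ) - 1 := by
                have : (p.1 : ℝ) + 1 ≤ (k : ℝ) := by exact_mod_cast hp2
                linarith
              nlinarith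
            have hdiv : C * x / Real.log k ≤ C * x := by
              rw [div_le_iff₀ hlogkpos]
              nlinarith [mul_nonneg hC.le hx]
            calc (l.map (fun p => E p.1 p.2)).sum + C * x / Real.log k
                ≤ C * (2 * (k:ℝ) - 1) * x + C * x := by linarith
              _ ≤ C * (1 + 2 * (k : ℝ)) * x := by nlinarith
        · -- large regime
          push_neg at hkN
          rw [if_neg (by omega)]
          have hL : T ^ 2 ≤ Real.log k := hlogbig k hkN
          have hL16 : 16 ≤ Real.log k := le_trans (by nlinarith) hL
          -- per-child bound
          have hchild : ∀ p ∈ l, E p.1 p.2 ≤ (A - 4 * C / Real.log k) * p.2 := by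
            intro p hp
            obtain ⟨hp1, hp2, hp3, hp4⟩ := hl3 p hp
            have hihp := ih p.1 hp2 p.2 hp4
            refine hihp.trans (mul_le_mul_of_nonneg_right ?_ hp4)
            by_cases hpN : p.1 ≤ N₁
            · rw [if_pos hpN] at hihp ⊢
              have h1 : (p.1 : ℝ) ≤ (N₁ : ℝ) := by exact_mod_cast hpN
              have h2 : 4 * C / Real.log k ≤ 4 * C :=
                div_le_self (by positivity) hlogk1
              have h3 : C * (1 + 2 * (p.1:ℝ)) ≤ C * (1 + 2 * (N₁:ℝ)) :=
                mul_le_mul_of_nonneg_left (by linarith) hC.le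
              rw [hA]; linarith
            · rw [if_neg hpN] at hihp ⊢
              push_neg at hpN
              -- need 3*C/log p.1 ≥ 4*C/log k, i.e. 4 log p.1 ≤ 3 log k
              have hppos : (0 : ℝ) < p.1 := by positivity
              have hlogp : Real.log p.1 ≤ (3 / 4) * Real.log k := by
                have hLpos : (0:ℝ) < Real.log k := by linarith
                set s : ℝ := Real.sqrt (Real.log k) with hs_def
                have hs0 : 0 ≤ s := Real.sqrt_nonneg _
                have hss : s * s = Real.log k := Real.mul_self_sqrt (le_of_lt hLpos)
                have hsT : T ≤ s := by
                  have h1 : Real.sqrt (T ^ 2) ≤ s := Real.sqrt_le_sqrt hL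
                  rwa [Real.sqrt_sq (by linarith : (0:ℝ) ≤ T)] at h1
                have hs4 : 4 ≤ s := le_trans hT4 hsT
                have hlogL : Real.log (Real.log k) ≤ 2 * s := by
                  have h1 : Real.log s ≤ s - 1 :=
                    Real.log_le_sub_one_of_pos (by linarith)
                  have h2 : Real.log s = Real.log (Real.log k) / 2 :=
                    Real.log_sqrt (le_of_lt hLpos)
                  linarith
                have hkp0 : (0:ℝ) < Real.sqrt k := Real.sqrt_pos.2 hkpos
                have hrp : (0:ℝ) < (Real.log k) ^ c := Real.rpow_pos_of_pos hLpos c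
                have h1 : Real.log p.1 ≤ Real.log (c * Real.sqrt k * (Real.log k) ^ c) :=
                  Real.log_le_log hppos hp3
                rw [Real.log_mul (by positivity) (ne_of_gt hrp),
                  Real.log_mul hc.ne' (ne_of_gt hkp0),
                  Real.log_sqrt (le_of_lt hkpos), Real.log_rpow hLpos] at h1
                have hclogL : c * Real.log (Real.log k) ≤ 2 * (c * s) := by nlinarith
                have hTs : s * T ≤ s * s := mul_le_mul_of_nonneg_left hsT hs0
                have has : a ≤ a * s :=
                  by nlinarith [mul_nonneg ha0 (by linarith : (0:ℝ) ≤ s - 1)]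
                have h44 : 2 * (c * s) + a ≤ s * s / 4 := by
                  rw [hT] at hTs
                  nlinarith
                linarith
              have hlogppos : 0 < Real.log p.1 := by
                have := hlogbig p.1 hpN
                nlinarith
              have : 4 * C / Real.log k ≤ 3 * C / Real.log p.1 := by
                rw [div_le_div_iff₀ hlogkpos hlogppos]
                nlinarith
              linarith
          have hB0 : 0 ≤ A - 4 * C / Real.log k := by
            have : 4 * C / Real.log k ≤ 4 * C :=
              div_le_self (by positivity) hlogk1
            have hNc : (0:ℝ) ≤ (N₁:ℝ) := Nat.cast_nonneg _
            have : 0 ≤ C * (1 + 2 * (N₁:ℝ)) := by positivity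
            rw [hA]; linarith
          have hsum := hsummul _ hchild hB0
          refine hl4.trans (max_le ?_ ?_)
          · have hd : 0 ≤ 3 * C / Real.log k := by positivity
            have h3 : 3 * C / Real.log k ≤ 3 * C :=
              div_le_self (by positivity) hlogk1
            have hNc : (0:ℝ) ≤ (N₁:ℝ) := Nat.cast_nonneg _
            have h4 : 0 ≤ C * (1 + 2 * (N₁:ℝ)) := by positivity
            have : C ≤ A - 3 * C / Real.log k := by rw [hA]; linarith
            exact mul_le_mul_of_nonneg_right this hx
          · have : C * x / Real.log k = (C / Real.log k) * x := by ring
            rw [this]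
            have : (A - 4 * C / Real.log k) * x + (C / Real.log k) * x
                = (A - 3 * C / Real.log k) * x := by ring
            linarith [hsum]
  refine ⟨A, fun n x hx => (key n x hx).trans (mul_le_mul_of_nonneg_right ?_ hx)⟩
  split_ifs with h
  · have h1 : (n : ℝ) ≤ (N₁ : ℝ) := by exact_mod_cast h
    rw [hA]; nlinarith
  · push_neg at h
    have hn3 : (3:ℝ) ≤ (n:ℝ) := by exact_mod_cast (show 3 ≤ n by omega)
    have : 0 < Real.log n := by
      rw [Real.lt_log_iff_exp_lt (by linarith)]
      calc Real.exp 0 = 1 := Real.exp_zero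
      _ < 3 := by norm_num
      _ ≤ (n:ℝ) := hn3
    have : 0 ≤ 3 * C / Real.log n := by positivity
    linarith
end

section
/- In the partition-tree counter scheme: if for each node v of a rooted tree, c_v counts the halfspaces of R containing the cell Γ_v but not containing Γ_{parent(v)}, and d_v is defined bottom-up by d_v = min over children v' of (d_{v'} + c_{v'}) with d_v at a leaf equal to the minimum, over points p in the leaf's point set, of the number of halfspaces of R crossing the leaf cell and containing p, then d_root equals the minimum depth over all points of X with respect to R. -/
/-!
For a cell `Γ` and a point `p ∈ Γ`, count the halfspaces of `R` containing `p` but not all of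
`Γ` (`relDepth`). Every node satisfies `d v = min_{p ∈ X_v} relDepth R (Γ v) p`: at a leaf,
general position makes "crosses the cell and contains `p`" the same as "contains `p` but not the
cell"; passing from a node to a child `u`, the halfspaces that stop being counted for
`p ∈ X_u` are exactly the `c u` ones that contain `Γ u` but not its parent's cell. At the root no
halfspace contains the cell, so `relDepth` is the depth.
-/

open Finset

noncomputable section

abbrev Pt3 := EuclideanSpace ℝ (Fin 3)

/-- The halfspace associated to a pair `(f, a)`: `{x | f x ≤ a}`. -/
def HS (h : (Pt3 →ₗ[ℝ] ℝ) × ℝ) : Set Pt3 := {x | h.1 x ≤ h.2}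

def HContains (h : (Pt3 →ₗ[ℝ] ℝ) × ℝ) (Γ : Set Pt3) : Prop := Γ ⊆ HS h

def HCrosses (h : (Pt3 →ₗ[ℝ] ℝ) × ℝ) (Γ : Set Pt3) : Prop :=
  ∃ x ∈ Γ, h.1 x = h.2

/-- The distance to the root strictly increases from a vertex to each of its children. -/
theorem wellFounded_isChild {V : Type*} [Finite V] {parent : V → V} {root : V}
    (hreach : ∀ v, ∃ k : ℕ, parent^[k] v = root) :
    WellFounded fun u v => parent u = v ∧ u ≠ root := by
  classical
  let δ v := Nat.find (hreach v)
  have dist_lt : ∀ u, u ≠ root → δ (parent u) < δ u := by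
    intro u hu
    have hu_root : parent^[δ u] u = root := Nat.find_spec (hreach u)
    obtain ⟨m, hm⟩ : ∃ m, δ u = m + 1 :=
      Nat.exists_eq_succ_of_ne_zero fun h0 => hu (by rwa [h0] at hu_root)
    rw [hm, Function.iterate_succ_apply] at hu_root
    exact hm ▸ Nat.lt_succ_of_le (Nat.find_min' _ hu_root)
  refine Subrelation.wf ?_ (Finite.wellFounded_of_trans_of_irrefl (InvImage (· > ·) δ))
  rintro u v ⟨rfl, hu⟩
  exact dist_lt u hu

open Classical in
def relDepth (R : Finset ((Pt3 →ₗ[ℝ] ℝ) × ℝ)) (Γ : Set Pt3) (p : Pt3) : ℕ :=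
  #{h ∈ R | p ∈ HS h ∧ ¬ HContains h Γ}

section relDepth

open Classical

variable (R : Finset ((Pt3 →ₗ[ℝ] ℝ) × ℝ))

theorem relDepth_of_forall_not_contains {Γ : Set Pt3} (hR : ∀ h ∈ R, ¬ HContains h Γ)
    (p : Pt3) : relDepth R Γ p = #{h ∈ R | p ∈ HS h} :=
  congrArg card <| filter_congr fun h hh => and_iff_left (hR h hh)

theorem relDepth_eq_add {Γ Γ' : Set Pt3} (hΓ : Γ' ⊆ Γ) {p : Pt3} (hp : p ∈ Γ') :
    relDepth R Γ p = relDepth R Γ' p + #{h ∈ R | HContains h Γ' ∧ ¬ HContains h Γ} := by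
  rw [relDepth, relDepth, ← card_union_of_disjoint]
  · refine congrArg card (ext fun h => ?_)
    simp only [mem_filter, mem_union]
    constructor
    · rintro ⟨hR, hph, hnot⟩
      by_cases hsub : HContains h Γ'
      · exact Or.inr ⟨hR, hsub, hnot⟩
      · exact Or.inl ⟨hR, hph, hsub⟩
    · rintro (⟨hR, hph, hnot⟩ | ⟨hR, hsub, hnot⟩)
      · exact ⟨hR, hph, fun hsub => hnot (hΓ.trans hsub)⟩
      · exact ⟨hR, hsub hp, hnot⟩
  · exact disjoint_filter.2 fun _ _ h₁ h₂ => h₁.2 h₂.1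

theorem inf_relDepth_add_card {Γ Γ' : Set Pt3} (hΓ : Γ' ⊆ Γ) (X : Finset Pt3)
    (hX : ∀ p ∈ X, p ∈ Γ') :
    X.inf (fun p => (relDepth R Γ' p : ℕ∞)) + #{h ∈ R | HContains h Γ' ∧ ¬ HContains h Γ} =
      X.inf fun p => (relDepth R Γ p : ℕ∞) := by
  rw [apply_inf_eq_inf_comp (· + _) (fun _ _ => (min_add_add_right _ _ _).symm) (top_add _)]
  refine inf_congr rfl fun p hp => ?_
  simp only [Function.comp_apply, relDepth_eq_add R hΓ (hX p hp), Nat.cast_add]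

theorem card_crosses_eq_relDepth {Γ : Set Pt3} {p : Pt3}
    (hgen : ∀ h ∈ R, ¬ (HContains h Γ ∧ HCrosses h Γ))
    (hmeet : ∀ h ∈ R, p ∈ HS h → HContains h Γ ∨ HCrosses h Γ) :
    #{h ∈ R | HCrosses h Γ ∧ p ∈ HS h} = relDepth R Γ p := by
  refine congrArg card <| filter_congr fun h hR => ⟨?_, ?_⟩
  · rintro ⟨hcross, hph⟩
    exact ⟨hph, fun hcont => hgen h hR ⟨hcont, hcross⟩⟩
  · rintro ⟨hph, hnot⟩
    exact ⟨(hmeet h hR hph).resolve_left hnot, hph⟩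

end relDepth

open Classical in
theorem stmt13_general (V : Type) [Fintype V] (root : V) (parent : V → V)
    (Γ : V → Set Pt3) (Xv : V → Finset Pt3)
    (R : Finset ((Pt3 →ₗ[ℝ] ℝ) × ℝ)) (c : V → ℕ) (d : V → ℕ∞)
    (hreach : ∀ v, ∃ k : ℕ, parent^[k] v = root)
    (hΓ : ∀ v, Γ v ⊆ Γ (parent v))
    (hXΓ : ∀ v, ∀ p ∈ Xv v, p ∈ Γ v)
    (hXnode : ∀ v, (Finset.univ.filter fun u => parent u = v ∧ u ≠ root) ≠ ∅ →
      Xv v = (Finset.univ.filter fun u => parent u = v ∧ u ≠ root).biUnion Xv)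
    (hnoRoot : ∀ h ∈ R, ¬ HContains h (Γ root))
    (hc : ∀ v, v ≠ root → c v =
      (R.filter fun h => HContains h (Γ v) ∧ ¬ HContains h (Γ (parent v))).card)
    (hdleaf : ∀ v, (Finset.univ.filter fun u => parent u = v ∧ u ≠ root) = ∅ →
      d v = (Xv v).inf fun p =>
        ((R.filter fun h => HCrosses h (Γ v) ∧ p ∈ HS h).card : ℕ∞))
    (hdnode : ∀ v, (Finset.univ.filter fun u => parent u = v ∧ u ≠ root) ≠ ∅ →
      d v = (Finset.univ.filter fun u => parent u = v ∧ u ≠ root).inf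
        fun u => d u + (c u : ℕ∞))
    (hgen : ∀ h ∈ R, ∀ v,
      (Finset.univ.filter fun u => parent u = v ∧ u ≠ root) = ∅ →
      ¬ (HContains h (Γ v) ∧ HCrosses h (Γ v)))
    (hmeet : ∀ h ∈ R, ∀ v,
      (Finset.univ.filter fun u => parent u = v ∧ u ≠ root) = ∅ →
      ∀ p ∈ Xv v, p ∈ HS h → HContains h (Γ v) ∨ HCrosses h (Γ v)) :
    d root = (Xv root).inf fun p => ((R.filter fun h => p ∈ HS h).card : ℕ∞) := by
  have hd : ∀ v, d v = (Xv v).inf fun p => (relDepth R (Γ v) p : ℕ∞) := by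
    intro v
    induction v using (wellFounded_isChild hreach).induction with
    | _ v ih =>
      by_cases hleaf : (univ.filter fun u => parent u = v ∧ u ≠ root) = ∅
      · rw [hdleaf v hleaf]
        refine inf_congr rfl fun p hp => ?_
        rw [card_crosses_eq_relDepth R (fun h hR => hgen h hR v hleaf)
          (fun h hR => hmeet h hR v hleaf p hp)]
      · rw [hdnode v hleaf, hXnode v hleaf, inf_biUnion]
        refine inf_congr rfl fun u hu => ?_
        obtain ⟨rfl, hu_root⟩ := (mem_filter.1 hu).2
        rw [ih u ⟨rfl, hu_root⟩, hc u hu_root, inf_relDepth_add_card R (hΓ u) (Xv u) (hXΓ u)]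
  rw [hd root]
  exact inf_congr rfl fun p _ => by rw [relDepth_of_forall_not_contains R hnoRoot p]

open Classical in
/-- partition-tree counter scheme.  A rooted tree with cells
`Γ v` (each contained in its parent's cell) and point sets `Xv v` (at an
internal node, the disjoint union of the children's point sets).  If
`c v` counts the halfspaces of `R` containing `Γ v` but not `Γ (parent v)`,
`d` at a leaf is the minimum over its points of the number of halfspaces of
`R` crossing the leaf cell and containing the point, and
`d v = min over children v' of (d v' + c v')` at internal nodes, then
`d root` equals the minimum depth in `R` over all points of `X = Xv root`. -/
theorem stmt13 (V : Type) [Fintype V] (root : V) (parent : V → V)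
    (Γ : V → Set Pt3) (Xv : V → Finset Pt3)
    (R : Finset ((Pt3 →ₗ[ℝ] ℝ) × ℝ)) (c : V → ℕ) (d : V → ℕ∞)
    (hroot : parent root = root)
    (hreach : ∀ v, ∃ k : ℕ, parent^[k] v = root)
    (hΓ : ∀ v, Γ v ⊆ Γ (parent v))
    (hXΓ : ∀ v, ∀ p ∈ Xv v, p ∈ Γ v)
    (hXnode : ∀ v, (Finset.univ.filter fun u => parent u = v ∧ u ≠ root) ≠ ∅ →
      Xv v = (Finset.univ.filter fun u => parent u = v ∧ u ≠ root).biUnion Xv)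
    (hXdisj : ∀ u u' : V, u ≠ u' → parent u = parent u' → u ≠ root →
      u' ≠ root → Disjoint (Xv u) (Xv u'))
    (hnoRoot : ∀ h ∈ R, ¬ HContains h (Γ root))
    (hc : ∀ v, v ≠ root → c v =
      (R.filter fun h => HContains h (Γ v) ∧ ¬ HContains h (Γ (parent v))).card)
    (hdleaf : ∀ v, (Finset.univ.filter fun u => parent u = v ∧ u ≠ root) = ∅ →
      d v = (Xv v).inf fun p =>
        ((R.filter fun h => HCrosses h (Γ v) ∧ p ∈ HS h).card : ℕ∞))
    (hdnode : ∀ v, (Finset.univ.filter fun u => parent u = v ∧ u ≠ root) ≠ ∅ →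
      d v = (Finset.univ.filter fun u => parent u = v ∧ u ≠ root).inf
        fun u => d u + (c u : ℕ∞))
    (hgen : ∀ h ∈ R, ∀ v,
      (Finset.univ.filter fun u => parent u = v ∧ u ≠ root) = ∅ →
      ¬ (HContains h (Γ v) ∧ HCrosses h (Γ v)))
    (hmeet : ∀ h ∈ R, ∀ v,
      (Finset.univ.filter fun u => parent u = v ∧ u ≠ root) = ∅ →
      ∀ p ∈ Xv v, p ∈ HS h → HContains h (Γ v) ∨ HCrosses h (Γ v)) :
    d root = (Xv root).inf fun p => ((R.filter fun h => p ∈ HS h).card : ℕ∞) :=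
  stmt13_general V root parent Γ Xv R c d hreach hΓ hXΓ hXnode hnoRoot hc hdleaf hdnode hgen hmeet

end
end
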